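/- arXiv:1409.4850 — 5 statements merged into one kernel-verified Lean document; each statement's English description precedes it below -/
import Mathlib

section
/- For an admissible set of hyperplanes a_1, ..., a_k in P^n with intersection X = a_1 ∩ ... ∩ a_k, there exist positive constants C_1, C_2 (depending only on the hyperplanes) such that for all w ∈ P^n: C_1 · max_{1≤j≤k} dist(w, a_j) ≤ dist(w, X) ≤ C_2 · max_{1≤j≤k} dist(w, a_j). -/
open scoped InnerProductSpace

/-!
The projection `P f` of `f` onto `S = span α` has the same inner products with the `α j` as `f`
itself. On the finite-dimensional space `S`, the linear map `v ↦ (⟪α j, v⟫)_j` is injective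
(a vector of `S` orthogonal to every `α j` is orthogonal to itself), hence anti-Lipschitz; so
`‖P f‖` is bounded above by a multiple of `max_j ‖⟪α j, f⟫‖`. The lower bound is Cauchy–Schwarz
for the unit vectors `α j`.
-/

section SpanInner

variable {𝕜 E ι : Type*} [RCLike 𝕜] [NormedAddCommGroup E] [InnerProductSpace 𝕜 E]
  [Fintype ι]

theorem Submodule.eq_zero_of_mem_span_range_of_forall_inner_eq_zero {v : ι → E} {x : E}
    (hx : x ∈ Submodule.span 𝕜 (Set.range v)) (h : ∀ i, ⟪v i, x⟫_𝕜 = 0) : x = 0 := by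
  obtain ⟨c, rfl⟩ := (Submodule.mem_span_range_iff_exists_fun 𝕜).mp hx
  refine (inner_self_eq_zero (𝕜 := 𝕜)).mp ?_
  simp only [sum_inner, inner_smul_left, h, mul_zero, Finset.sum_const_zero]

theorem Submodule.exists_norm_le_mul_norm_inner_of_mem_span_range (v : ι → E) :
    ∃ C > (0 : ℝ), ∀ x ∈ Submodule.span 𝕜 (Set.range v), ‖x‖ ≤ C * ‖fun i => ⟪v i, x⟫_𝕜‖ := by
  set S := Submodule.span 𝕜 (Set.range v)
  have : FiniteDimensional 𝕜 S := FiniteDimensional.span_of_finite 𝕜 (Set.finite_range v)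
  let T : S →ₗ[𝕜] ι → 𝕜 := LinearMap.pi fun i => (innerₛₗ 𝕜 (v i)).comp S.subtype
  have hT : LinearMap.ker T = ⊥ :=
    LinearMap.ker_eq_bot'.mpr fun x hx => Subtype.ext <|
      eq_zero_of_mem_span_range_of_forall_inner_eq_zero x.2 fun i => congrFun hx i
  obtain ⟨K, hK, hKT⟩ := T.exists_antilipschitzWith hT
  exact ⟨K, hK, fun x hx => hKT.le_mul_norm (map_zero T) ⟨x, hx⟩⟩

end SpanInner

theorem stmt_9_general {n k : ℕ} (hk : 0 < k)
    (α : Fin k → EuclideanSpace ℂ (Fin (n + 1)))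
    (hunit : ∀ j, ‖α j‖ = 1) :
    ∃ C₁ > (0 : ℝ), ∃ C₂ > (0 : ℝ),
      ∀ f : EuclideanSpace ℂ (Fin (n + 1)), ‖f‖ = 1 →
        C₁ * ((Finset.univ.sup' ⟨⟨0, hk⟩, Finset.mem_univ _⟩
              fun j => ‖⟪α j, f⟫_ℂ‖))
            ≤ ‖(Submodule.orthogonalProjectionOnto (Submodule.span ℂ (Set.range α)) f :
                EuclideanSpace ℂ (Fin (n + 1)))‖ ∧
        ‖(Submodule.orthogonalProjectionOnto (Submodule.span ℂ (Set.range α)) f :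
                EuclideanSpace ℂ (Fin (n + 1)))‖
            ≤ C₂ * ((Finset.univ.sup' ⟨⟨0, hk⟩, Finset.mem_univ _⟩
              fun j => ‖⟪α j, f⟫_ℂ‖)) := by
  set S := Submodule.span ℂ (Set.range α)
  obtain ⟨C, hC, hbound⟩ := Submodule.exists_norm_le_mul_norm_inner_of_mem_span_range (𝕜 := ℂ) α
  refine ⟨1, one_pos, C, hC, fun f _ => ?_⟩
  set P : EuclideanSpace ℂ (Fin (n + 1)) := ↑(S.orthogonalProjectionOnto f)
  set M := Finset.univ.sup' ⟨⟨0, hk⟩, Finset.mem_univ _⟩ fun j => ‖⟪α j, f⟫_ℂ‖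
  have hle_M : ∀ j, ‖⟪α j, f⟫_ℂ‖ ≤ M := fun j =>
    Finset.le_sup' (fun j => ‖⟪α j, f⟫_ℂ‖) (Finset.mem_univ j)
  have hinner : ∀ j, ⟪α j, P⟫_ℂ = ⟪α j, f⟫_ℂ := fun j =>
    S.inner_orthogonalProjectionOnto_eq_of_mem_left ⟨α j, Submodule.subset_span ⟨j, rfl⟩⟩ f
  refine ⟨?_, ?_⟩
  · refine (one_mul M).le.trans <| Finset.sup'_le _ _ fun j _ => ?_
    calc ‖⟪α j, f⟫_ℂ‖ = ‖⟪α j, P⟫_ℂ‖ := by rw [hinner]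
      _ ≤ ‖P‖ := by simpa only [hunit j, one_mul] using norm_inner_le_norm (𝕜 := ℂ) (α j) P
  · calc ‖P‖ ≤ C * ‖fun j => ⟪α j, P⟫_ℂ‖ := hbound P (S.orthogonalProjectionOnto f).2
      _ ≤ C * M := by
          gcongr
          refine (pi_norm_le_iff_of_nonneg ((norm_nonneg _).trans (hle_M ⟨0, hk⟩))).mpr fun j => ?_
          rw [hinner]
          exact hle_M j

/-- Points of `P^n` are represented by unit vectors `f ∈ ℂ^{n+1}`.  A hyperplane `a_j` is
defined by a unit vector `α j`, and the chordal distance from `[f]` to `a_j` is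
`‖⟪α j, f⟫‖`.  For an admissible family (the `α j` linearly independent), the flat
`X = a_1 ∩ ... ∩ a_k` is the projectivization of `(span α)ᗮ`, and the chordal distance
from `[f]` to `X` is the norm of the orthogonal projection of `f` onto `span α`.
The statement: `dist(w, X)` is comparable, with constants depending only on the
hyperplanes, to `max_j dist(w, a_j)`. -/
theorem stmt_9 {n k : ℕ} (hk : 0 < k) (hkn : k ≤ n)
    (α : Fin k → EuclideanSpace ℂ (Fin (n + 1)))
    (hunit : ∀ j, ‖α j‖ = 1) (hli : LinearIndependent ℂ α) :
    ∃ C₁ > (0 : ℝ), ∃ C₂ > (0 : ℝ),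
      ∀ f : EuclideanSpace ℂ (Fin (n + 1)), ‖f‖ = 1 →
        C₁ * ((Finset.univ.sup' ⟨⟨0, hk⟩, Finset.mem_univ _⟩
              fun j => ‖⟪α j, f⟫_ℂ‖))
            ≤ ‖(Submodule.orthogonalProjectionOnto (Submodule.span ℂ (Set.range α)) f :
                EuclideanSpace ℂ (Fin (n + 1)))‖ ∧
        ‖(Submodule.orthogonalProjectionOnto (Submodule.span ℂ (Set.range α)) f :
                EuclideanSpace ℂ (Fin (n + 1)))‖
            ≤ C₂ * ((Finset.univ.sup' ⟨⟨0, hk⟩, Finset.mem_univ _⟩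
              fun j => ‖⟪α j, f⟫_ℂ‖)) :=
  stmt_9_general hk α hunit
end

section
/- Lemma 1 of the paper: Let A be a finite complete set of hyperplanes in P^n (i.e., the defining vectors of the hyperplanes in A span ℂ^{n+1}). For w ∈ P^n, let d_k(w) be the shortest chordal distance from w to a flat of codimension k generated by A (an intersection of hyperplanes from A of codimension k). Then there exists C > 0 such that for every w ∈ P^n: ∏_{k=1}^{n} d_k(w) ≥ C · min_B ∏_{a∈B} dist(w, a), where the minimum is over all admissible subsets B ⊆ A of cardinality n+1. -/
/-!
Write `f a = ‖⟪a, w⟫‖` for the distance from `[w]` to the hyperplane with unit normal `a`, and pick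
`b 0, …, b n ∈ A` greedily, each `b i` minimising `f` over the elements of `A` outside the span
of `b 0, …, b (i - 1)`; since `A` spans, this yields an admissible set of size `n + 1`.
An admissible `S` of size `k` spans a `k`-dimensional space, so some `a ∈ S` lies outside the
span of `b 0, …, b (k - 2)`, whence `f (b (k - 1)) ≤ f a ≤ ‖proj_{span S} w‖`, i.e.
`d_k(w) ≥ f (b (k - 1))`. As `f (b n) ≤ 1`, the inequality holds with `C = 1`.
-/

open scoped InnerProductSpace

theorem Submodule.norm_inner_le_norm_mul_norm_orthogonalProjectionOnto {𝕜 E : Type*} [RCLike 𝕜]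
    [NormedAddCommGroup E] [InnerProductSpace 𝕜 E] (K : Submodule 𝕜 E) [K.HasOrthogonalProjection]
    {a : E} (ha : a ∈ K) (w : E) :
    ‖⟪a, w⟫_𝕜‖ ≤ ‖a‖ * ‖(K.orthogonalProjectionOnto w : E)‖ := by
  simpa using norm_inner_le_norm (𝕜 := 𝕜) (⟨a, ha⟩ : K) (K.orthogonalProjectionOnto w)

section Greedy

variable (K : Type*) {V α : Type*} [Field K] [AddCommGroup V] [Module K V] [DecidableEq V]
  [LinearOrder α]

/-- `b 0, …, b (k - 1)` are chosen greedily for `f`: each `b i` minimises `f` over the elements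
of `A` outside the span of its predecessors. -/
structure IsGreedyPrefix (A : Finset V) (f : V → α) (k : ℕ) (b : ℕ → V) : Prop where
  mem : ∀ i < k, b i ∈ A
  linearIndepOn : LinearIndepOn K b (Finset.range k : Set ℕ)
  mem_span_of_lt : ∀ i < k, ∀ a ∈ A, f a < f (b i) →
    a ∈ Submodule.span K ((Finset.range i).image b : Set V)

theorem finrank_span_image_range_le (b : ℕ → V) (i : ℕ) :
    Module.finrank K (Submodule.span K ((Finset.range i).image b : Set V)) ≤ i :=
  (finrank_span_finset_le_card _).trans (Finset.card_image_le.trans (Finset.card_range i).le)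

variable {K} {A : Finset V} {f : V → α} {k : ℕ} {b : ℕ → V}

theorem IsGreedyPrefix.mono (h : IsGreedyPrefix K A f k b) {j : ℕ} (hj : j ≤ k) :
    IsGreedyPrefix K A f j b where
  mem i hi := h.mem i (by omega)
  linearIndepOn := h.linearIndepOn.mono (by simpa using Finset.range_subset_range.2 hj)
  mem_span_of_lt i hi := h.mem_span_of_lt i (by omega)

theorem IsGreedyPrefix.image_range_subset (h : IsGreedyPrefix K A f k b) :
    (Finset.range k).image b ⊆ A := by
  simpa [Finset.image_subset_iff] using h.mem

theorem IsGreedyPrefix.card_image_range (h : IsGreedyPrefix K A f k b) :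
    ((Finset.range k).image b).card = k := by
  rw [Finset.card_image_of_injOn h.linearIndepOn.injOn, Finset.card_range]

theorem IsGreedyPrefix.linearIndepOn_image_range (h : IsGreedyPrefix K A f k b) :
    LinearIndepOn K id ((Finset.range k).image b : Set V) := by
  simpa using h.linearIndepOn.id_image

theorem IsGreedyPrefix.exists_le_of_linearIndepOn (h : IsGreedyPrefix K A f k b) {i : ℕ}
    (hi : i < k) {S : Finset V} (hSA : S ⊆ A) (hS : S.card = i + 1)
    (hSind : LinearIndepOn K id (S : Set V)) : ∃ a ∈ S, f (b i) ≤ f a := by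
  by_contra! hlt
  have hspan :
      Submodule.span K (S : Set V) ≤ Submodule.span K ((Finset.range i).image b : Set V) :=
    Submodule.span_le.2 fun a ha ↦ h.mem_span_of_lt i hi a (hSA ha) (hlt a ha)
  have : i + 1 ≤ i := calc
    i + 1 = Module.finrank K (Submodule.span K (S : Set V)) := by
      rw [finrank_span_finset_eq_card hSind, hS]
    _ ≤ Module.finrank K (Submodule.span K ((Finset.range i).image b : Set V)) :=
      Submodule.finrank_mono hspan
    _ ≤ i := finrank_span_image_range_le K b i
  omega

theorem IsGreedyPrefix.exists_update (h : IsGreedyPrefix K A f k b)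
    (hk : k < Module.finrank K (Submodule.span K (A : Set V))) :
    ∃ a, IsGreedyPrefix K A f (k + 1) (Function.update b k a) := by
  classical
  set P := Submodule.span K ((Finset.range k).image b : Set V)
  have hAP : (A.filter (· ∉ P)).Nonempty := by
    by_contra hempty
    have hAP : ∀ a ∈ A, a ∈ P := by
      simpa [Finset.not_nonempty_iff_eq_empty, Finset.filter_eq_empty_iff] using hempty
    have := (Submodule.finrank_mono (Submodule.span_le.2 hAP)).trans
      (finrank_span_image_range_le K b k)
    omega
  obtain ⟨a₀, ha₀, hmin⟩ := (A.filter (· ∉ P)).exists_min_image f hAP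
  rw [Finset.mem_filter] at ha₀
  have himage : ∀ i ≤ k,
      (Finset.range i).image (Function.update b k a₀) = (Finset.range i).image b :=
    fun i hi ↦ Finset.image_congr fun j hj ↦
      Function.update_of_ne (by have := Finset.mem_range.1 hj; omega) _ _
  refine ⟨a₀, ⟨fun i hi ↦ ?_, ?_, fun i hi a ha hlt ↦ ?_⟩⟩
  · rcases Nat.lt_succ_iff_lt_or_eq.1 hi with hi | rfl
    · rw [Function.update_of_ne hi.ne]
      exact h.mem i hi
    · simpa using ha₀.1
  · rw [Finset.range_add_one, Finset.coe_insert, linearIndepOn_insert (by simp)]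
    refine ⟨h.linearIndepOn.congr fun j hj ↦ ?_, ?_⟩
    · rw [Function.update_of_ne (Finset.mem_range.1 hj).ne]
    · rw [Function.update_self, ← Finset.coe_image, himage k le_rfl]
      exact ha₀.2
  · rw [himage i (by omega)]
    rcases Nat.lt_succ_iff_lt_or_eq.1 hi with hi | rfl
    · rw [Function.update_of_ne hi.ne] at hlt
      exact h.mem_span_of_lt i hi a ha hlt
    · by_contra haP
      rw [Function.update_self] at hlt
      exact (hmin a (Finset.mem_filter.2 ⟨ha, haP⟩)).not_gt hlt

variable (K) in
theorem exists_isGreedyPrefix (A : Finset V) (f : V → α) {k : ℕ}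
    (hk : k ≤ Module.finrank K (Submodule.span K (A : Set V))) :
    ∃ b, IsGreedyPrefix K A f k b := by
  induction k with
  | zero => exact ⟨0, ⟨by simp, by simp, by simp⟩⟩
  | succ k ih =>
    obtain ⟨b, hb⟩ := ih (by omega)
    obtain ⟨a, ha⟩ := hb.exists_update hk
    exact ⟨_, ha⟩

theorem IsGreedyPrefix.sInf_le_prod {f : V → ℝ} (h : IsGreedyPrefix K A f k b)
    (hf : ∀ a, 0 ≤ f a) :
    sInf {r : ℝ | ∃ B : Finset V, B ⊆ A ∧ B.card = k ∧
      LinearIndependent K (Subtype.val : ↥(B : Set V) → V) ∧ r = ∏ a ∈ B, f a} ≤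
      ∏ i ∈ Finset.range k, f (b i) := by
  refine csInf_le ⟨0, ?_⟩ ⟨_, h.image_range_subset, h.card_image_range,
    h.linearIndepOn_image_range, (Finset.prod_image h.linearIndepOn.injOn).symm⟩
  rintro r ⟨B, -, -, -, rfl⟩
  exact Finset.prod_nonneg fun a _ ↦ hf a

end Greedy

section Projection

variable {𝕜 E : Type*} [RCLike 𝕜] [NormedAddCommGroup E] [InnerProductSpace 𝕜 E] [DecidableEq E]

theorem IsGreedyPrefix.norm_inner_le_sInf_norm_orthogonalProjectionOnto {A : Finset E}
    (hA : ∀ a ∈ A, ‖a‖ = 1) {w : E} {k : ℕ} {b : ℕ → E}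
    (h : IsGreedyPrefix 𝕜 A (fun a ↦ ‖⟪a, w⟫_𝕜‖) k b) {j : ℕ} (hj : 0 < j) (hjk : j ≤ k) :
    ‖⟪b (j - 1), w⟫_𝕜‖ ≤ sInf {r : ℝ | ∃ S : Finset E, S ⊆ A ∧ S.card = j ∧
      LinearIndependent 𝕜 (Subtype.val : ↥(S : Set E) → E) ∧
      r = ‖(Submodule.orthogonalProjectionOnto (Submodule.span 𝕜 (S : Set E)) w : E)‖} := by
  have hj' := h.mono hjk
  refine le_csInf ⟨_, _, hj'.image_range_subset, hj'.card_image_range,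
    hj'.linearIndepOn_image_range, rfl⟩ ?_
  rintro r ⟨S, hSA, hS, hSind, rfl⟩
  obtain ⟨a, haS, hle⟩ :=
    h.exists_le_of_linearIndepOn (i := j - 1) (by omega) hSA (by omega) hSind
  calc ‖⟪b (j - 1), w⟫_𝕜‖ ≤ ‖⟪a, w⟫_𝕜‖ := hle
    _ ≤ ‖a‖ * _ := Submodule.norm_inner_le_norm_mul_norm_orthogonalProjectionOnto _
      (Submodule.subset_span haS) w
    _ = _ := by rw [hA a (hSA haS), one_mul]

end Projection

/-- Lemma 1.  Points of `P^n` are represented by unit vectors `w ∈ ℂ^{n+1}` and hyperplanes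
by unit normal vectors `a ∈ A`; `dist(w, a) = ‖⟪a, w⟫‖`.  A flat of codimension `k`
generated by `A` is cut out by an admissible (linearly independent) subset `S ⊆ A` of
cardinality `k`, and the chordal distance from `[w]` to it is the norm of the orthogonal
projection of `w` onto `span S`; `d_k(w)` is the infimum of these distances over all such
`S`.  Then there is `C > 0` with
`∏_{k=1}^n d_k(w) ≥ C · min_B ∏_{a ∈ B} dist(w, a)`, the minimum being over all
admissible subsets `B ⊆ A` of cardinality `n+1`. -/
theorem stmt_10 {n : ℕ} (A : Finset (EuclideanSpace ℂ (Fin (n + 1))))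
    (hA1 : ∀ a ∈ A, ‖a‖ = 1)
    (hAspan : Submodule.span ℂ (A : Set (EuclideanSpace ℂ (Fin (n + 1)))) = ⊤) :
    ∃ C > (0 : ℝ), ∀ w : EuclideanSpace ℂ (Fin (n + 1)), ‖w‖ = 1 →
      (∏ k ∈ Finset.Icc 1 n,
        sInf {r : ℝ | ∃ S : Finset (EuclideanSpace ℂ (Fin (n + 1))),
          S ⊆ A ∧ S.card = k ∧
          LinearIndependent ℂ (Subtype.val :
            ↥(S : Set (EuclideanSpace ℂ (Fin (n + 1)))) → EuclideanSpace ℂ (Fin (n + 1))) ∧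
          r = ‖(Submodule.orthogonalProjectionOnto
              (Submodule.span ℂ (S : Set (EuclideanSpace ℂ (Fin (n + 1))))) w :
              EuclideanSpace ℂ (Fin (n + 1)))‖})
      ≥ C * sInf {r : ℝ | ∃ B : Finset (EuclideanSpace ℂ (Fin (n + 1))),
          B ⊆ A ∧ B.card = n + 1 ∧
          LinearIndependent ℂ (Subtype.val :
            ↥(B : Set (EuclideanSpace ℂ (Fin (n + 1)))) → EuclideanSpace ℂ (Fin (n + 1))) ∧
          r = ∏ a ∈ B, ‖⟪a, w⟫_ℂ‖} := by
  classical
  refine ⟨1, one_pos, fun w hw ↦ ?_⟩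
  have hrank :
      n + 1 ≤ Module.finrank ℂ (Submodule.span ℂ (A : Set (EuclideanSpace ℂ (Fin (n + 1))))) := by
    rw [hAspan, finrank_top, finrank_euclideanSpace_fin]
  obtain ⟨b, hb⟩ := exists_isGreedyPrefix ℂ A (fun a ↦ ‖⟪a, w⟫_ℂ‖) hrank
  have hlast : ‖⟪b n, w⟫_ℂ‖ ≤ 1 := by
    simpa [hA1 _ (hb.mem n n.lt_add_one), hw] using norm_inner_le_norm (𝕜 := ℂ) (b n) w
  rw [ge_iff_le, one_mul]
  calc _ ≤ ∏ i ∈ Finset.range (n + 1), ‖⟪b i, w⟫_ℂ‖ := hb.sInf_le_prod fun _ ↦ norm_nonneg _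
    _ ≤ ∏ i ∈ Finset.range n, ‖⟪b i, w⟫_ℂ‖ := by
      rw [Finset.prod_range_succ]
      exact mul_le_of_le_one_right (Finset.prod_nonneg fun _ _ ↦ norm_nonneg _) hlast
    _ = ∏ k ∈ Finset.Icc 1 n, ‖⟪b (k - 1), w⟫_ℂ‖ := by
      rw [← Finset.Ico_add_one_right_eq_Icc, Finset.prod_Ico_eq_prod_range]
      simp
    _ ≤ _ := Finset.prod_le_prod (fun _ _ ↦ norm_nonneg _) fun k hk ↦
      hb.norm_inner_le_sInf_norm_orthogonalProjectionOnto hA1 (Finset.mem_Icc.1 hk).1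
        ((Finset.mem_Icc.1 hk).2.trans n.le_succ)
end

section
/- Proposition (pointwise version): Let α_1, ..., α_q ∈ ℂ^{n+1} (q ≥ n+1) be unit vectors, any n+1 of which are linearly independent, defining hyperplanes a_1,...,a_q in P^n. Fix w ∈ P^n not lying on any a_j. Order indices so that dist(w, a_{j_1}) ≤ ... ≤ dist(w, a_{j_q}). Then there is a constant C > 0 depending only on the hyperplanes (not on w) such that Σ_{m=1}^{q} log(1/dist(w, a_{j_m})) ≤ Σ_{k=1}^{n} log(1/dist(w, x_k)) + C, where x_k = a_{j_1} ∩ ... ∩ a_{j_k}. -/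
/-! On the span of a finite family of vectors, a vector is bounded by a constant times its
largest inner product with the family (the map `v ↦ (⟪a, v⟫)ₐ` is injective there). The
orthogonal projection of `f` onto the span of the `k` nearest normals has the same inner
products with them as `f`, each of size at most the `k`-th smallest distance; since there are
only finitely many subfamilies, this gives `dist(w, x_k) ≤ K · dist(w, a_{j_k})` with one `K`.
Once `k ≥ n + 1` the span is everything by admissibility, so the projection is `f` itself, of
norm `1`. Taking logarithms and summing gives the claim with `C = q log K + 1`. -/

open scoped InnerProductSpace

open Submodule

section InnerProductSpace

variable {𝕜 E : Type*} [RCLike 𝕜] [NormedAddCommGroup E] [InnerProductSpace 𝕜 E]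

theorem exists_norm_le_of_forall_norm_inner_le {s : Set E} (hs : s.Finite) :
    ∃ K : ℝ, 0 < K ∧ ∀ v ∈ span 𝕜 s, ∀ r : ℝ, 0 ≤ r →
      (∀ a ∈ s, ‖⟪a, v⟫_𝕜‖ ≤ r) → ‖v‖ ≤ K * r := by
  let := hs.fintype
  have := FiniteDimensional.span_of_finite 𝕜 hs
  let Φ : span 𝕜 s →ₗ[𝕜] (s → 𝕜) :=
    LinearMap.pi fun a => (innerₛₗ 𝕜 (a : E)).comp (span 𝕜 s).subtype
  have hker : LinearMap.ker Φ = ⊥ := by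
    refine LinearMap.ker_eq_bot'.2 fun v hv => ?_
    have hortho : span 𝕜 s ⟂ span 𝕜 {(v : E)} := by
      refine isOrtho_span.2 fun a ha w hw => ?_
      rw [Set.mem_singleton_iff.1 hw]
      exact congrFun hv ⟨a, ha⟩
    exact Subtype.ext <| inner_self_eq_zero.1 <|
      hortho.inner_eq v.2 (subset_span (Set.mem_singleton _))
  obtain ⟨K, hK0, hK⟩ := Φ.exists_antilipschitzWith hker
  refine ⟨K, hK0, fun v hv r hr h => ?_⟩
  calc ‖v‖ = ‖(⟨v, hv⟩ : span 𝕜 s)‖ := rfl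
    _ ≤ K * ‖Φ ⟨v, hv⟩‖ := ZeroHomClass.bound_of_antilipschitz Φ hK _
    _ ≤ K * r := by
      gcongr
      exact (pi_norm_le_iff_of_nonneg hr).2 fun a => h a a.2

theorem inner_orthogonalProjectionOnto_eq_of_mem {K : Submodule 𝕜 E} [K.HasOrthogonalProjection]
    {a : E} (ha : a ∈ K) (f : E) : ⟪a, (K.orthogonalProjectionOnto f : E)⟫_𝕜 = ⟪a, f⟫_𝕜 := by
  simpa only [coe_inner] using inner_orthogonalProjectionOnto_eq_of_mem_left ⟨a, ha⟩ f

theorem orthogonalProjectionOnto_ne_zero_of_inner_ne_zero {K : Submodule 𝕜 E}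
    [K.HasOrthogonalProjection] {a f : E} (ha : a ∈ K) (h : ⟪a, f⟫_𝕜 ≠ 0) :
    (K.orthogonalProjectionOnto f : E) ≠ 0 := fun h0 =>
  h (by rw [← inner_orthogonalProjectionOnto_eq_of_mem ha f, h0, inner_zero_right])

theorem norm_orthogonalProjectionOnto_of_mem {K : Submodule 𝕜 E} [K.HasOrthogonalProjection]
    {f : E} (hf : f ∈ K) : ‖(K.orthogonalProjectionOnto f : E)‖ = ‖f‖ := by
  rw [← starProjection_apply, starProjection_eq_self_iff.2 hf]

theorem exists_forall_norm_orthogonalProjectionOnto_le [FiniteDimensional 𝕜 E]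
    {ι : Type*} [Finite ι] (α : ι → E) :
    ∃ K : ℝ, 1 ≤ K ∧ ∀ (s : Set ι) (f : E) (r : ℝ), 0 ≤ r → (∀ i ∈ s, ‖⟪α i, f⟫_𝕜‖ ≤ r) →
      ‖((span 𝕜 (α '' s)).orthogonalProjectionOnto f : E)‖ ≤ K * r := by
  choose K _ hK using fun s : Set ι =>
    exists_norm_le_of_forall_norm_inner_le (𝕜 := 𝕜) ((Set.toFinite s).image α)
  obtain ⟨M, hM⟩ := Finite.exists_le K
  refine ⟨max M 1, le_max_right _ _, fun s f r hr h => ?_⟩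
  calc ‖((span 𝕜 (α '' s)).orthogonalProjectionOnto f : E)‖ ≤ K s * r :=
        hK s _ (coe_mem _) r hr <| Set.forall_mem_image.2 fun i hi => by
          rw [inner_orthogonalProjectionOnto_eq_of_mem (subset_span (Set.mem_image_of_mem α hi))]
          exact h i hi
    _ ≤ max M 1 * r := by gcongr; exact (hM s).trans (le_max_left _ _)

end InnerProductSpace

theorem linearIndependent_comp_of_forall_card_eq {R M ι : Type*} [Semiring R]
    [AddCommMonoid M] [Module R M] {n : ℕ} {α : ι → M}
    (h : ∀ S : Finset ι, S.card = n → LinearIndependent R (fun j : S => α j))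
    {e : Fin n → ι} (he : e.Injective) : LinearIndependent R (α ∘ e) :=
  (h (Finset.univ.map ⟨e, he⟩) (by simp)).comp (fun i => ⟨e i, by simp⟩)
    fun _ _ hij => he (congrArg Subtype.val hij)

theorem span_image_setOf_val_le_eq_top {K V : Type*} [DivisionRing K] [AddCommGroup V]
    [Module K V] {n q : ℕ} (hq : n + 1 ≤ q) {β : Fin q → V}
    (hβ : LinearIndependent K (β ∘ Fin.castLE hq)) (hV : Module.finrank K V = n + 1)
    {k : ℕ} (hk : n ≤ k) : span K (β '' {j | (j : ℕ) ≤ k}) = ⊤ := by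
  refine eq_top_iff.2 <| (hβ.span_eq_top_of_card_eq_finrank (by simp [hV])).ge.trans
    (span_mono ?_)
  rintro _ ⟨i, rfl⟩
  exact ⟨Fin.castLE hq i, by simp only [Set.mem_ofPred_eq, Fin.val_castLE]; omega, rfl⟩

open Real in
theorem sum_log_one_div_le_of_le_mul {n q : ℕ} (hnq : n ≤ q) {d : Fin q → ℝ} {p : ℕ → ℝ}
    {K : ℝ} (hp : ∀ m : Fin q, 0 < p m ∧ p m ≤ K * d m) (hp_one : ∀ k, n ≤ k → p k = 1) :
    ∑ m, log (1 / d m) ≤ ∑ k : Fin n, log (1 / p k) + q * log K := by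
  have hterm : ∀ m : Fin q, log (1 / d m) ≤ log (1 / p m) + log K := fun m => by
    obtain ⟨hp0, hpd⟩ := hp m
    have hKd : K * d m ≠ 0 := (hp0.trans_le hpd).ne'
    have := log_le_log hp0 hpd
    rw [log_mul (left_ne_zero_of_mul hKd) (right_ne_zero_of_mul hKd)] at this
    simp only [one_div, log_inv]
    linarith
  have htail : ∑ k ∈ Finset.Ico n q, log (1 / p k) = 0 :=
    Finset.sum_eq_zero fun k hk => by rw [hp_one k (Finset.mem_Ico.1 hk).1]; simp
  calc ∑ m, log (1 / d m) ≤ ∑ m : Fin q, (log (1 / p m) + log K) :=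
        Finset.sum_le_sum fun m _ => hterm m
    _ = ∑ k : Fin n, log (1 / p k) + q * log K := by
      rw [Finset.sum_add_distrib, Finset.sum_const, Finset.card_univ, Fintype.card_fin,
        nsmul_eq_mul, Fin.sum_univ_eq_sum_range (fun k => log (1 / p k)),
        Fin.sum_univ_eq_sum_range (fun k => log (1 / p k)),
        ← Finset.sum_range_add_sum_Ico _ hnq, htail, add_zero]

theorem stmt_13_general {n q : ℕ} (hq : n + 1 ≤ q)
    (α : Fin q → EuclideanSpace ℂ (Fin (n + 1)))
    (hadm : ∀ S : Finset (Fin q), S.card = n + 1 →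
      LinearIndependent ℂ (fun j : ↥S => α j)) :
    ∃ C : ℝ, 0 < C ∧
      ∀ f : EuclideanSpace ℂ (Fin (n + 1)), ‖f‖ = 1 →
        (∀ j, ⟪α j, f⟫_ℂ ≠ 0) →
        ∀ σ : Equiv.Perm (Fin q),
          (∀ i j : Fin q, i ≤ j → ‖⟪α (σ i), f⟫_ℂ‖ ≤ ‖⟪α (σ j), f⟫_ℂ‖) →
          ∑ m : Fin q, Real.log (1 / ‖⟪α (σ m), f⟫_ℂ‖)
            ≤ (∑ k : Fin n, Real.log (1 /
                ‖(Submodule.orthogonalProjectionOnto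
                    (Submodule.span ℂ
                      ((fun j : Fin q => α (σ j)) '' {j : Fin q | (j : ℕ) ≤ (k : ℕ)})) f :
                  EuclideanSpace ℂ (Fin (n + 1)))‖)) + C := by
  obtain ⟨K, hK1, hK⟩ := exists_forall_norm_orthogonalProjectionOnto_le (𝕜 := ℂ) α
  refine ⟨q * Real.log K + 1,
    add_pos_of_nonneg_of_pos (mul_nonneg q.cast_nonneg (Real.log_nonneg hK1)) one_pos, ?_⟩
  intro f hf hfα σ hmono
  have hli : LinearIndependent ℂ ((fun j => α (σ j)) ∘ Fin.castLE hq) :=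
    linearIndependent_comp_of_forall_card_eq hadm (σ.injective.comp (Fin.castLE_injective hq))
  have hspan (k : ℕ) (hk : n ≤ k) :
      span ℂ ((fun j => α (σ j)) '' {j : Fin q | (j : ℕ) ≤ k}) = ⊤ :=
    span_image_setOf_val_le_eq_top hq hli finrank_euclideanSpace_fin hk
  refine (sum_log_one_div_le_of_le_mul (K := K) (Nat.le_of_succ_le hq) (p := fun k =>
      ‖((span ℂ ((fun j => α (σ j)) '' {j : Fin q | (j : ℕ) ≤ k})).orthogonalProjectionOnto f :
        EuclideanSpace ℂ (Fin (n + 1)))‖)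
      (fun m => ⟨?pos, ?le⟩) fun k hk => ?eq_one).trans (by linarith)
  case pos =>
    exact norm_pos_iff.2 <| orthogonalProjectionOnto_ne_zero_of_inner_ne_zero
      (subset_span (Set.mem_image_of_mem _ (le_refl (m : ℕ)))) (hfα (σ m))
  case le =>
    rw [← Set.image_image]
    exact hK _ f _ (norm_nonneg _) <| Set.forall_mem_image.2 fun j hj => hmono j m hj
  case eq_one =>
    rw [norm_orthogonalProjectionOnto_of_mem (by rw [hspan k hk]; exact mem_top), hf]

/-- Pointwise version of the Proposition.  Hyperplanes in `P^n` are given by unit vectors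
`α 1, ..., α q` in `ℂ^{n+1}` (`q ≥ n+1`), any `n+1` of which are linearly independent;
for a point represented by a unit vector `f`, `dist(w, a_j) = ‖⟪α j, f⟫‖`, and the
distance to the codimension-`k` flat `x_k` cut out by the `k` nearest hyperplanes is the
norm of the orthogonal projection of `f` onto the span of their normals.  If the indices
are ordered (by a permutation `σ`) so that the distances `‖⟪α (σ m), f⟫‖` are
nondecreasing, then
`∑_{m=1}^q log (1/dist(w, a_{j_m})) ≤ ∑_{k=1}^n log (1/dist(w, x_k)) + C`,
with `C` depending only on the hyperplanes. -/
theorem stmt_13 {n q : ℕ} (hq : n + 1 ≤ q)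
    (α : Fin q → EuclideanSpace ℂ (Fin (n + 1)))
    (hunit : ∀ j, ‖α j‖ = 1)
    (hadm : ∀ S : Finset (Fin q), S.card = n + 1 →
      LinearIndependent ℂ (fun j : ↥S => α j)) :
    ∃ C : ℝ, 0 < C ∧
      ∀ f : EuclideanSpace ℂ (Fin (n + 1)), ‖f‖ = 1 →
        (∀ j, ⟪α j, f⟫_ℂ ≠ 0) →
        ∀ σ : Equiv.Perm (Fin q),
          (∀ i j : Fin q, i ≤ j → ‖⟪α (σ i), f⟫_ℂ‖ ≤ ‖⟪α (σ j), f⟫_ℂ‖) →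
          ∑ m : Fin q, Real.log (1 / ‖⟪α (σ m), f⟫_ℂ‖)
            ≤ (∑ k : Fin n, Real.log (1 /
                ‖(Submodule.orthogonalProjectionOnto
                    (Submodule.span ℂ
                      ((fun j : Fin q => α (σ j)) '' {j : Fin q | (j : ℕ) ≤ (k : ℕ)})) f :
                  EuclideanSpace ℂ (Fin (n + 1)))‖)) + C :=
  stmt_13_general hq α hadm
end

section
/- If q ≥ n+2 unit vectors α_1, ..., α_q ∈ ℂ^{n+1} have the property that any n+1 of them are linearly independent, then there exists δ > 0 such that for every unit vector f ∈ ℂ^{n+1}, at most n of the values |⟨α_j, f⟩| are less than δ. -/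
/-!
For any `n + 1` of the vectors, which form a basis of `ℂ^{n+1}`, the map
`f ↦ (⟪α j, f⟫)_j` is an injective linear map out of a finite-dimensional space, hence
anti-Lipschitz; so on the unit sphere some `|⟪α j, f⟫|` is bounded below by a constant `δ_S > 0`.
The minimum of the finitely many `δ_S` works: if `n + 1` values were below it, the
corresponding `n + 1` vectors would contradict the bound for their own basis.
-/

open Filter Topology
open scoped InnerProductSpace

theorem Module.Basis.exists_pos_le_norm_inner {𝕜 E ι : Type*} [RCLike 𝕜] [NormedAddCommGroup E]
    [InnerProductSpace 𝕜 E] [FiniteDimensional 𝕜 E] [Fintype ι] (b : Module.Basis ι 𝕜 E) :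
    ∃ δ > (0 : ℝ), ∀ f : E, ‖f‖ = 1 → ∃ i, δ ≤ ‖⟪b i, f⟫_𝕜‖ := by
  let T : E →ₗ[𝕜] ι → 𝕜 := LinearMap.pi fun i => innerₛₗ 𝕜 (b i)
  have hker : LinearMap.ker T = ⊥ :=
    LinearMap.ker_eq_bot'.2 fun f hf =>
      InnerProductSpace.ext_inner_left_basis b fun i => by simpa [T] using congr_fun hf i
  obtain ⟨K, hK, hT⟩ := T.exists_antilipschitzWith hker
  refine ⟨(K : ℝ)⁻¹, by positivity, fun f hf => ?_⟩
  by_contra! hsmall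
  have hTf : ‖T f‖ < (K : ℝ)⁻¹ :=
    (pi_norm_lt_iff (by positivity)).2 fun i => by simpa [T] using hsmall i
  have hK' : (0 : ℝ) < K := hK
  refine (lt_irrefl (1 : ℝ)) ?_
  calc (1 : ℝ) = ‖f‖ := hf.symm
    _ ≤ K * ‖T f‖ := hT.le_mul_norm (map_zero T) f
    _ < K * (K : ℝ)⁻¹ := by gcongr
    _ = 1 := mul_inv_cancel₀ hK'.ne'

theorem Set.ncard_setOf_lt_le_of_forall_card_eq {ι α : Type*} [Finite ι] [LinearOrder α]
    {g : ι → α} {δ : α} {n : ℕ} (h : ∀ S : Finset ι, S.card = n + 1 → ∃ j ∈ S, δ ≤ g j) :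
    {j | g j < δ}.ncard ≤ n := by
  by_contra! hn
  obtain ⟨t, hts, htcard⟩ := Set.exists_subset_card_eq (Nat.succ_le_of_lt hn)
  have ht : t.Finite := t.toFinite
  obtain ⟨j, hj, hδj⟩ := h ht.toFinset (by rw [← Set.ncard_eq_toFinset_card t ht, htcard])
  exact (hts (ht.mem_toFinset.1 hj)).not_ge hδj

theorem stmt_14_general {n q : ℕ}
    (α : Fin q → EuclideanSpace ℂ (Fin (n + 1)))
    (hadm : ∀ S : Finset (Fin q), S.card = n + 1 →
      LinearIndependent ℂ (fun j : ↥S => α j)) :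
    ∃ δ > (0 : ℝ), ∀ f : EuclideanSpace ℂ (Fin (n + 1)), ‖f‖ = 1 →
      {j : Fin q | ‖⟪α j, f⟫_ℂ‖ < δ}.ncard ≤ n := by
  have key : ∀ S : Finset (Fin q), ∀ᶠ δ in 𝓝[>] (0 : ℝ), S.card = n + 1 →
      ∀ f : EuclideanSpace ℂ (Fin (n + 1)), ‖f‖ = 1 → ∃ j ∈ S, δ ≤ ‖⟪α j, f⟫_ℂ‖ := by
    intro S
    by_cases hS : S.card = n + 1
    · obtain ⟨δ₀, hδ₀, hbound⟩ := (basisOfLinearIndependentOfCardEqFinrank'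
        (fun j : ↥S => α j) (hadm S hS) (by simp [hS])).exists_pos_le_norm_inner
      filter_upwards [Ioc_mem_nhdsGT hδ₀] with δ hδ _ f hf
      obtain ⟨j, hj⟩ := hbound f hf
      exact ⟨j, j.2, hδ.2.trans (by simpa using hj)⟩
    · exact Eventually.of_forall fun _ h => absurd h hS
  obtain ⟨δ, hδ, hpos⟩ := ((eventually_all.2 key).and self_mem_nhdsWithin).exists
  exact ⟨δ, hpos, fun f hf =>
    Set.ncard_setOf_lt_le_of_forall_card_eq fun S hS => hδ S hS f hf⟩

/-- If `q ≥ n+2` unit vectors `α 1, ..., α q` in `ℂ^{n+1}` are such that any `n+1` of them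
are linearly independent, then there is `δ > 0` such that for every unit vector `f`,
at most `n` of the values `‖⟪α j, f⟫‖` are less than `δ`. -/
theorem stmt_14 {n q : ℕ} (hq : n + 2 ≤ q)
    (α : Fin q → EuclideanSpace ℂ (Fin (n + 1)))
    (hunit : ∀ j, ‖α j‖ = 1)
    (hadm : ∀ S : Finset (Fin q), S.card = n + 1 →
      LinearIndependent ℂ (fun j : ↥S => α j)) :
    ∃ δ > (0 : ℝ), ∀ f : EuclideanSpace ℂ (Fin (n + 1)), ‖f‖ = 1 →
      {j : Fin q | ‖⟪α j, f⟫_ℂ‖ < δ}.ncard ≤ n :=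
  stmt_14_general α hadm
end

section
/- Differentiation formula for quotients of Wronskians: for sufficiently differentiable functions w_0, ..., w_n of one variable, d/dz log(W_j / W_n) = ± (W_{j,n} · W) / (W_j · W_n), where W is the Wronskian of all n+1 functions, W_j (resp. W_n) is the Wronskian of size n omitting w_j (resp. w_n), and W_{j,n} is the Wronskian of size n−1 omitting both w_j and w_n, valid at points where W_j and W_n are nonzero. -/
/-!
Let `M` be the `(n + 2) × (n + 2)` matrix of derivatives `w_i^{(k)}(z)`. Since the derivative of
a determinant is the sum of the determinants with one column differentiated, the derivative of a
Wronskian of size `n + 1` is the minor with derivative orders `0, …, n - 1, n + 1`. Hence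
`W_j, W_n, W_j', W_n'` are the four minors of `M` obtained by deleting one of the rows `j, n + 1`
and one of the last two columns, `W_{j,n}` is the minor deleting both pairs, and the identity
`W_{j,n} · W = ± (W_j' W_n - W_j W_n')` is the Desnanot–Jacobi identity for `M`. Reordering the
functions changes each Wronskian only by a sign, which reduces it to `j = n`, where it follows
from the Schur complement formula when the top-left `n × n` block is invertible and in general by
density.
-/

/-- The Wronskian of a family of `m` functions of one complex variable, evaluated at `z`:
the determinant of the `m × m` matrix whose `(i, k)` entry is the `k`-th derivative of the
`i`-th function at `z`. -/
noncomputable def wronskian {m : ℕ} (g : Fin m → ℂ → ℂ) (z : ℂ) : ℂ :=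
  Matrix.det (fun i k : Fin m => iteratedDeriv (k : ℕ) (g i) z)

open Matrix

namespace Matrix

theorem hasDerivAt_det {𝕜 𝔸 ι : Type*} [NontriviallyNormedField 𝕜] [NormedCommRing 𝔸]
    [NormedAlgebra 𝕜 𝔸] [Fintype ι] [DecidableEq ι] {A : 𝕜 → Matrix ι ι 𝔸}
    {A' : Matrix ι ι 𝔸} {z : 𝕜} (hA : ∀ i k, HasDerivAt (fun u => A u i k) (A' i k) z) :
    HasDerivAt (fun u => (A u).det) (∑ k, ((A z).updateCol k fun i => A' i k).det) z := by
  simp only [det_apply']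
  rw [Finset.sum_comm]
  refine HasDerivAt.fun_sum fun σ _ => ?_
  refine ((HasDerivAt.fun_finsetProd fun i _ => hA (σ i) i).const_mul
    ((Equiv.Perm.sign σ : ℤ) : 𝔸)).congr_deriv ?_
  rw [Finset.mul_sum]
  refine Finset.sum_congr rfl fun k _ => ?_
  rw [← Finset.prod_erase_mul _ _ (Finset.mem_univ k), updateCol_self, smul_eq_mul]
  congr 2
  refine Finset.prod_congr rfl fun i hi => ?_
  rw [updateCol_ne (Finset.ne_of_mem_erase hi)]

variable {ι R 𝕜 : Type*} [Fintype ι] [DecidableEq ι]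

def borderedMinor [CommRing R] (M : Matrix (ι ⊕ Fin 2) (ι ⊕ Fin 2) R) (p q : Fin 2) : R :=
  (M.submatrix (Sum.map id fun _ : Fin 1 => p) (Sum.map id fun _ : Fin 1 => q)).det

theorem det_mul_det_toBlocks₁₁_of_invertible [CommRing R]
    (M : Matrix (ι ⊕ Fin 2) (ι ⊕ Fin 2) R) [Invertible M.toBlocks₁₁] :
    M.det * M.toBlocks₁₁.det =
      M.borderedMinor 0 0 * M.borderedMinor 1 1 - M.borderedMinor 0 1 * M.borderedMinor 1 0 := by
  set S := M.toBlocks₂₂ - M.toBlocks₂₁ * ⅟M.toBlocks₁₁ * M.toBlocks₁₂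
  have hdet : M.det = M.toBlocks₁₁.det * S.det := by
    rw [← det_fromBlocks₁₁, fromBlocks_toBlocks]
  have hbordered (p q : Fin 2) : M.borderedMinor p q = M.toBlocks₁₁.det * S p q := by
    have hblocks : M.submatrix (Sum.map id fun _ : Fin 1 => p) (Sum.map id fun _ : Fin 1 => q) =
        fromBlocks M.toBlocks₁₁ (M.toBlocks₁₂.submatrix id fun _ => q)
          (M.toBlocks₂₁.submatrix (fun _ => p) id)
          (M.toBlocks₂₂.submatrix (fun _ => p) fun _ => q) := by
      ext (i | i) (k | k) <;> rfl
    rw [borderedMinor, hblocks, det_fromBlocks₁₁, det_fin_one]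
    simp [S, Matrix.mul_apply]
  rw [hdet, det_fin_two, hbordered, hbordered, hbordered, hbordered]
  ring

/-- The Desnanot–Jacobi identity, with the two deleted rows and columns placed last. -/
theorem det_mul_det_toBlocks₁₁ [NontriviallyNormedField 𝕜]
    (M : Matrix (ι ⊕ Fin 2) (ι ⊕ Fin 2) 𝕜) :
    M.det * M.toBlocks₁₁.det =
      M.borderedMinor 0 0 * M.borderedMinor 1 1 - M.borderedMinor 0 1 * M.borderedMinor 1 0 := by
  -- Adding `t • 1` to the top-left block makes it invertible for all but finitely many `t`, the
  -- roots of a characteristic polynomial; both sides are continuous in `t`.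
  set P : 𝕜 → Matrix (ι ⊕ Fin 2) (ι ⊕ Fin 2) 𝕜 := fun t => M + t • fromBlocks 1 0 0 0
  have hblock (t : 𝕜) : (P t).toBlocks₁₁ = M.toBlocks₁₁ + t • 1 := by
    ext; simp [P, toBlocks₁₁]
  have hfinite : {t : 𝕜 | (M.toBlocks₁₁ + t • 1).det = 0}.Finite := by
    convert Polynomial.finite_setOfPred_isRoot (charpoly_monic (-M.toBlocks₁₁)).ne_zero using 3
    simp [eval_charpoly, add_comm, smul_one_eq_diagonal]
  have hdense : Dense {t : 𝕜 | (M.toBlocks₁₁ + t • 1).det = 0}ᶜ := by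
    simpa [Set.compl_eq_univ_sdiff] using dense_univ.sdiff_finite hfinite
  have hP := congrFun (Continuous.ext_on hdense
    (f := fun t => (P t).det * (P t).toBlocks₁₁.det)
    (g := fun t => (P t).borderedMinor 0 0 * (P t).borderedMinor 1 1 -
      (P t).borderedMinor 0 1 * (P t).borderedMinor 1 0)
    (by simp only [hblock]; fun_prop) (by unfold borderedMinor; fun_prop)
    fun t (ht : (M.toBlocks₁₁ + t • 1).det ≠ 0) => by
      rw [← hblock] at ht
      have := invertibleOfIsUnitDet _ (isUnit_iff_ne_zero.mpr ht)
      exact det_mul_det_toBlocks₁₁_of_invertible (P t)) 0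
  simpa [P] using hP

theorem det_mul_det_submatrix_castSucc_castSucc [NontriviallyNormedField 𝕜] {n : ℕ}
    (M : Matrix (Fin (n + 2)) (Fin (n + 2)) 𝕜) :
    M.det * (M.submatrix (fun i : Fin n => i.castSucc.castSucc)
        fun i : Fin n => i.castSucc.castSucc).det =
      (M.submatrix Fin.castSucc Fin.castSucc).det *
          (M.submatrix (Fin.last n).castSucc.succAbove (Fin.last n).castSucc.succAbove).det -
        (M.submatrix Fin.castSucc (Fin.last n).castSucc.succAbove).det *
          (M.submatrix (Fin.last n).castSucc.succAbove Fin.castSucc).det := by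
  set r : Fin 2 → Fin (n + 1) → Fin (n + 2) := ![Fin.castSucc, (Fin.last n).castSucc.succAbove]
  have hr (p : Fin 2) :
      finSumFinEquiv ∘ Sum.map id (fun _ : Fin 1 => p) = r p ∘ finSumFinEquiv := by
    fin_cases p <;> ext (i | i) <;> simp [r, Fin.succAbove, Fin.lt_def]
  have hminor (p q : Fin 2) :
      (M.submatrix finSumFinEquiv finSumFinEquiv).borderedMinor p q =
        (M.submatrix (r p) (r q)).det := by
    rw [borderedMinor, submatrix_submatrix, hr, hr, ← submatrix_submatrix,
      det_submatrix_equiv_self]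
  have key := det_mul_det_toBlocks₁₁ (M.submatrix finSumFinEquiv finSumFinEquiv)
  rwa [det_submatrix_equiv_self, hminor, hminor, hminor, hminor] at key

end Matrix

theorem Function.Injective.exists_perm_comp_eq {ι α : Type*} {r r' : ι → α}
    (hr : r.Injective) (hr' : r'.Injective) (h : Set.range r = Set.range r') :
    ∃ σ : Equiv.Perm ι, r ∘ σ = r' := by
  refine ⟨(Equiv.ofInjective r' hr').trans ((Equiv.setCongr h.symm).trans
    (Equiv.ofInjective r hr).symm), funext fun i => ?_⟩
  simp [Equiv.apply_ofInjective_symm]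

noncomputable def iteratedDerivMatrix {ι : Type*} (g : ι → ℂ → ℂ) (N : ℕ) (z : ℂ) :
    Matrix ι (Fin N) ℂ :=
  Matrix.of fun i k => iteratedDeriv k (g i) z

theorem hasDerivAt_wronskian {m : ℕ} {g : Fin (m + 1) → ℂ → ℂ}
    (hg : ∀ i, ContDiff ℂ (m + 1) (g i)) (z : ℂ) :
    HasDerivAt (wronskian g)
      ((iteratedDerivMatrix g (m + 2) z).submatrix id (Fin.last m).castSucc.succAbove).det z := by
  have hentry (i k : Fin (m + 1)) :
      HasDerivAt (fun u => iteratedDeriv k (g i) u) (iteratedDeriv (k + 1) (g i) z) z := by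
    rw [iteratedDeriv_succ]
    exact ((hg i).differentiable_iteratedDeriv k (by norm_cast; omega)).differentiableAt.hasDerivAt
  refine (hasDerivAt_det (A := iteratedDerivMatrix g (m + 1)) hentry).congr_deriv ?_
  -- Differentiating any column but the last produces two equal columns.
  rw [Finset.sum_eq_single (Fin.last m) ?_ (by simp)]
  · congr 1
    ext i k
    rcases Fin.eq_castSucc_or_eq_last k with ⟨k, rfl⟩ | rfl
    · simp [iteratedDerivMatrix, Fin.succAbove_of_castSucc_lt, Fin.castSucc_lt_castSucc_iff]
    · simp [iteratedDerivMatrix, Fin.succAbove_of_le_castSucc]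
  · intro k _ hk
    obtain ⟨k, rfl⟩ := Fin.exists_castSucc_eq.mpr hk
    refine det_zero_of_column_eq (Fin.castSucc_lt_succ (i := k)).ne fun i => ?_
    simp [iteratedDerivMatrix, updateCol_ne (Fin.castSucc_lt_succ (i := k)).ne']

theorem wronskian_mul_wronskian_castSucc_castSucc {n : ℕ} {v : Fin (n + 2) → ℂ → ℂ}
    (hv : ∀ i, ContDiff ℂ (n + 1) (v i)) (z : ℂ) :
    wronskian v z * wronskian (fun i : Fin n => v i.castSucc.castSucc) z =
      wronskian (fun i => v i.castSucc) z *
          deriv (wronskian fun i => v ((Fin.last n).castSucc.succAbove i)) z -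
        deriv (wronskian fun i => v i.castSucc) z *
          wronskian (fun i => v ((Fin.last n).castSucc.succAbove i)) z := by
  have hderiv (r : Fin (n + 1) → Fin (n + 2)) : deriv (wronskian fun i => v (r i)) z =
      ((iteratedDerivMatrix v (n + 2) z).submatrix r (Fin.last n).castSucc.succAbove).det :=
    (hasDerivAt_wronskian (fun i => hv (r i)) z).deriv
  rw [hderiv, hderiv]
  exact (iteratedDerivMatrix v (n + 2) z).det_mul_det_submatrix_castSucc_castSucc

theorem wronskian_comp_perm {m : ℕ} (g : Fin m → ℂ → ℂ) (σ : Equiv.Perm (Fin m)) (z : ℂ) :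
    wronskian (fun i => g (σ i)) z = Equiv.Perm.sign σ * wronskian g z :=
  det_permute σ (Matrix.of fun i (k : Fin m) => iteratedDeriv k (g i) z)

theorem exists_wronskian_comp_eq_sign_mul {N m : ℕ} (g : Fin N → ℂ → ℂ)
    {r r' : Fin m → Fin N} (hr : r.Injective) (hr' : r'.Injective)
    (h : Set.range r = Set.range r') :
    ∃ s : ℤˣ, (wronskian fun i => g (r' i)) = fun z => s * wronskian (fun i => g (r i)) z := by
  obtain ⟨σ, rfl⟩ := hr.exists_perm_comp_eq hr' h
  exact ⟨Equiv.Perm.sign σ, funext (wronskian_comp_perm (fun i => g (r i)) σ)⟩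

theorem exists_sign_mul_wronskian_mul_wronskian_eq {n : ℕ} {w : Fin (n + 2) → ℂ → ℂ}
    (hw : ∀ i, ContDiff ℂ (n + 1) (w i)) (j : Fin (n + 1)) :
    ∃ s : ℤˣ, ∀ z,
      s * (wronskian (fun i : Fin n => w (j.succAbove i).castSucc) z * wronskian w z) =
        wronskian (fun i => w i.castSucc) z *
            deriv (wronskian fun i => w (j.castSucc.succAbove i)) z -
          deriv (wronskian fun i => w i.castSucc) z *
            wronskian (fun i => w (j.castSucc.succAbove i)) z := by
  -- Swapping `w j` and `w n` reduces to `wronskian_mul_wronskian_castSucc_castSucc`.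
  set τ : Equiv.Perm (Fin (n + 2)) := Equiv.swap j.castSucc (Fin.last n).castSucc
  have hτ_last : τ (Fin.last (n + 1)) = Fin.last (n + 1) :=
    Equiv.swap_apply_of_ne_of_ne (Fin.castSucc_lt_last j).ne' (Fin.castSucc_lt_last _).ne'
  have hτ_castSucc (k : Fin (n + 1)) : τ k.castSucc = (Equiv.swap j (Fin.last n) k).castSucc :=
    (Fin.castSucc_injective _).swap_apply _ _ _
  obtain ⟨s₁, h₁⟩ := exists_wronskian_comp_eq_sign_mul w (r := j.castSucc.succAbove)
    (r' := fun i => τ ((Fin.last n).castSucc.succAbove i)) Fin.succAbove_right_injective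
    (τ.injective.comp Fin.succAbove_right_injective) (by
      rw [Set.range_comp' τ, Fin.range_succAbove, Fin.range_succAbove,
        Set.image_compl_eq τ.bijective, Set.image_singleton, Equiv.swap_apply_right])
  obtain ⟨s₂, h₂⟩ := exists_wronskian_comp_eq_sign_mul w (r := Fin.castSucc)
    (r' := fun i => τ i.castSucc) (Fin.castSucc_injective _)
    (τ.injective.comp (Fin.castSucc_injective _)) (by
      rw [Set.range_comp' τ, ← Fin.succAbove_last, Fin.range_succAbove,
        Set.image_compl_eq τ.bijective, Set.image_singleton, hτ_last])
  obtain ⟨s₃, h₃⟩ := exists_wronskian_comp_eq_sign_mul w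
    (r := fun i : Fin n => (j.succAbove i).castSucc) (r' := fun i => τ i.castSucc.castSucc)
    ((Fin.castSucc_injective _).comp Fin.succAbove_right_injective)
    (τ.injective.comp ((Fin.castSucc_injective _).comp (Fin.castSucc_injective _))) (by
      simp_rw [hτ_castSucc]
      rw [Set.range_comp' Fin.castSucc, Set.range_comp' Fin.castSucc,
        Set.range_comp' (Equiv.swap _ _), ← @Fin.succAbove_last n, Fin.range_succAbove,
        Fin.range_succAbove, Set.image_compl_eq (Equiv.bijective _), Set.image_singleton,
        Equiv.swap_apply_right])
  refine ⟨Equiv.Perm.sign τ * s₃ * s₁ * s₂, fun z => ?_⟩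
  have key := wronskian_mul_wronskian_castSucc_castSucc (v := fun i => w (τ i)) (fun i => hw _) z
  rw [wronskian_comp_perm w τ, h₁, h₂, h₃, deriv_const_mul_field', deriv_const_mul_field'] at key
  have hsq : ((s₁ * s₂ : ℤˣ) : ℂ) * (s₁ * s₂ : ℤˣ) = 1 := by
    rw [← Int.cast_mul, ← Units.val_mul, Int.units_mul_self, Units.val_one, Int.cast_one]
  push_cast at key hsq ⊢
  linear_combination (s₁ * s₂ : ℂ) * key +
    (wronskian (fun i => w i.castSucc) z * deriv (wronskian fun i => w (j.castSucc.succAbove i)) z -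
      deriv (wronskian fun i => w i.castSucc) z *
        wronskian (fun i => w (j.castSucc.succAbove i)) z) * hsq

/-- Jacobi/Frobenius differentiation formula for quotients of Wronskians: with `n+2`
holomorphic functions `w_0, ..., w_{n+1}`, `W` their full Wronskian, `W_j` (resp. `W_last`)
the Wronskian of size `n+1` omitting `w_j` (resp. the last function), and `W_{j,last}` the
Wronskian of size `n` omitting both, one has, at points where `W_j` and `W_last` are
nonzero, `d/dz log (W_j / W_last) = ± (W_{j,last} · W) / (W_j · W_last)`. -/
theorem stmt_15 {n : ℕ} (w : Fin (n + 2) → ℂ → ℂ)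
    (hw : ∀ i, Differentiable ℂ (w i)) (j : Fin (n + 1)) :
    ∃ ε : ℂ, (ε = 1 ∨ ε = -1) ∧
      ∀ z : ℂ,
        wronskian (fun i : Fin (n + 1) => w (Fin.succAbove j.castSucc i)) z ≠ 0 →
        wronskian (fun i : Fin (n + 1) => w i.castSucc) z ≠ 0 →
        deriv (fun u =>
            wronskian (fun i : Fin (n + 1) => w (Fin.succAbove j.castSucc i)) u /
            wronskian (fun i : Fin (n + 1) => w i.castSucc) u) z /
          (wronskian (fun i : Fin (n + 1) => w (Fin.succAbove j.castSucc i)) z /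
            wronskian (fun i : Fin (n + 1) => w i.castSucc) z)
        = ε * (wronskian (fun i : Fin n => w (Fin.castSucc (Fin.succAbove j i))) z *
               wronskian w z) /
              (wronskian (fun i : Fin (n + 1) => w (Fin.succAbove j.castSucc i)) z *
               wronskian (fun i : Fin (n + 1) => w i.castSucc) z) := by
  obtain ⟨s, hs⟩ := exists_sign_mul_wronskian_mul_wronskian_eq (fun i => (hw i).contDiff) j
  refine ⟨s, by rcases Int.units_eq_one_or s with rfl | rfl <;> simp, fun z hWj hWn => ?_⟩
  have hdiff (r : Fin (n + 1) → Fin (n + 2)) :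
      DifferentiableAt ℂ (wronskian fun i => w (r i)) z :=
    (hasDerivAt_wronskian (fun i => (hw (r i)).contDiff) z).differentiableAt
  rw [deriv_fun_div (hdiff _) (hdiff _) hWn]
  field_simp
  linear_combination -hs z
end
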